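/- Let G = 2₊^{1+4} with its standard presentation, A a commutative ring, and ρ : G → GL₂(A) any representation. Then tr(ρ(a²)) = 2. -/

import Mathlib

/-!
Put `Z = ρ(a²)` and `P = 1 - Z`, so that `Z² = 1`. If `g X g⁻¹ = Z X` and `X` commutes with `Z`,
conjugating the Cayley–Hamilton identity `X² = tr X • X - det X` by `g` gives
`tr X • Z X = tr X • X`, hence `X² P = -det X • P`. The relations provide such a `g` for `X = a`
(`g = b`) and for `X = c`, `X = ac` (`g = d`); since `a² = c² = Z` and `(ac)² = 1`, this yields
`det a • P = P`, `det c • P = P` and `P = -(det a det c) • P = -P`, so `2 P = 0`. Finally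
`det Z = 1` because `d c d⁻¹ = Z c`, and Cayley–Hamilton for `Z` becomes `tr Z • Z = 2`, whence
`tr Z = 2 Z = 2`.
-/

def extraspecialRels : Set (FreeGroup (Fin 4)) :=
  { (FreeGroup.of 0) ^ 4, (FreeGroup.of 1) ^ 2, (FreeGroup.of 3) ^ 2,
    (FreeGroup.of 2) ^ 2 * ((FreeGroup.of 0) ^ 2)⁻¹,
    FreeGroup.of 1 * FreeGroup.of 0 * FreeGroup.of 1 * FreeGroup.of 0,
    FreeGroup.of 0 * FreeGroup.of 2 * (FreeGroup.of 0)⁻¹ * (FreeGroup.of 2)⁻¹,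
    FreeGroup.of 0 * FreeGroup.of 3 * (FreeGroup.of 0)⁻¹ * (FreeGroup.of 3)⁻¹,
    FreeGroup.of 1 * FreeGroup.of 2 * (FreeGroup.of 1)⁻¹ * (FreeGroup.of 2)⁻¹,
    FreeGroup.of 1 * FreeGroup.of 3 * (FreeGroup.of 1)⁻¹ * (FreeGroup.of 3)⁻¹,
    FreeGroup.of 3 * FreeGroup.of 2 * FreeGroup.of 3 *
      ((FreeGroup.of 0) ^ 2 * FreeGroup.of 2)⁻¹ }

abbrev Extraspecial32 : Type := PresentedGroup extraspecialRels

namespace Matrix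

variable {A : Type*} [CommRing A]

theorem mul_self_fin_two (X : Matrix (Fin 2) (Fin 2) A) :
    X * X = X.trace • X - X.det • 1 := by
  ext i j
  fin_cases i <;> fin_cases j <;>
    simp only [Fin.zero_eta, Fin.mk_one, Fin.isValue, mul_apply, Fin.sum_univ_two, trace_fin_two,
      det_fin_two, Matrix.sub_apply, Matrix.smul_apply, smul_eq_mul, one_apply_eq, one_apply_ne,
      ne_eq, zero_ne_one, one_ne_zero, not_false_eq_true, mul_one, mul_zero, sub_zero] <;> ring

theorem mul_self_mul_one_sub_of_semiconjBy {X Z : Matrix (Fin 2) (Fin 2) A} (g : GL (Fin 2) A)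
    (hZ : Z * Z = 1) (hZX : Commute Z X)
    (hg : SemiconjBy (g : Matrix (Fin 2) (Fin 2) A) X (Z * X)) :
    X * X * (1 - Z) = -X.det • (1 - Z) := by
  have hXX : SemiconjBy (g : Matrix (Fin 2) (Fin 2) A) (X * X) (X * X) := by
    simpa only [hZX.symm.mul_mul_mul_comm, hZ, one_mul] using hg.mul_right hg
  have hCH :
      SemiconjBy (g : Matrix (Fin 2) (Fin 2) A) (X * X) (X.trace • (Z * X) - X.det • 1) := by
    rw [mul_self_fin_two X]
    exact (hg.smul_right _).sub_right ((SemiconjBy.one_right _).smul_right _)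
  have htr : X.trace • (Z * X) = X.trace • X := by
    have h := (Units.mul_left_inj g).mp (hCH.eq.symm.trans hXX.eq)
    rwa [mul_self_fin_two X, sub_left_inj] at h
  rw [mul_self_fin_two, sub_mul, smul_mul_assoc, mul_sub, mul_one, ← hZX.eq, smul_sub, htr,
    sub_self, zero_sub, smul_mul_assoc, one_mul, neg_smul]

theorem trace_eq_two_of_mul_self_eq_one {Z : Matrix (Fin 2) (Fin 2) A} (hZ : Z * Z = 1)
    (hdet : Z.det = 1) (h2 : (2 : A) • (1 - Z) = 0) : Z.trace = 2 := by
  have hCH : Z.trace • Z = 1 + 1 := by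
    rw [mul_self_fin_two, hdet, one_smul] at hZ
    exact sub_eq_iff_eq_add.mp hZ
  have hZZ : Z + Z = 1 + 1 := by
    rw [← sub_eq_zero, ← neg_eq_zero, ← h2, two_smul]
    abel
  have h : Z.trace • (1 : Matrix (Fin 2) (Fin 2) A) = 1 + 1 :=
    calc Z.trace • (1 : Matrix (Fin 2) (Fin 2) A) = (Z.trace • Z) * Z := by
          rw [smul_mul_assoc, hZ]
      _ = 1 + 1 := by rw [hCH, add_mul, one_mul, hZZ]
  simpa [one_add_one_eq_two] using congrFun (congrFun h 0) 0

end Matrix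

namespace Matrix.GeneralLinearGroup

variable {A : Type*} [CommRing A]

theorem det_eq_one_of_semiconjBy {n : Type*} [Fintype n] [DecidableEq n] {g x z : GL n A}
    (h : SemiconjBy g x (z * x)) : (z : Matrix n n A).det = 1 := by
  have h' := semiconjBy_iff_eq.mp (h.map det)
  rw [map_mul, eq_comm, mul_eq_right] at h'
  rw [← val_det_apply, h', Units.val_one]

theorem trace_sq_eq_two {a b c d : GL (Fin 2) A} (ha : a ^ 4 = 1) (hc : c ^ 2 = a ^ 2)
    (hac : Commute a c) (hba : SemiconjBy b a (a ^ 2 * a)) (hda : Commute d a)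
    (hdc : SemiconjBy d c (a ^ 2 * c)) :
    trace (↑(a ^ 2) : Matrix (Fin 2) (Fin 2) A) = 2 := by
  have hZ : ((a ^ 2 : GL (Fin 2) A) : Matrix (Fin 2) (Fin 2) A) *
      ((a ^ 2 : GL (Fin 2) A) : Matrix (Fin 2) (Fin 2) A) = 1 := by
    rw [← Units.val_mul, ← pow_add, ha, Units.val_one]
  have hZa : Commute (a ^ 2) a := (Commute.refl a).pow_left 2
  have hA := mul_self_mul_one_sub_of_semiconjBy b hZ hZa.units_val
    (by rw [← Units.val_mul]; exact hba.units_val)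
  have hC := mul_self_mul_one_sub_of_semiconjBy d hZ (hac.pow_left 2).units_val
    (by rw [← Units.val_mul]; exact hdc.units_val)
  have hAC := mul_self_mul_one_sub_of_semiconjBy (X := ↑(a * c)) d hZ
    (hZa.mul_right (hac.pow_left 2)).units_val
    (by rw [← Units.val_mul, ← hZa.symm.left_comm]
        exact (SemiconjBy.mul_right hda hdc).units_val)
  rw [← Units.val_mul, ← sq] at hA
  rw [← Units.val_mul, ← sq, hc] at hC
  rw [← Units.val_mul, ← sq, hac.mul_pow, hc, ← pow_add, ha, Units.val_one, Units.val_mul,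
    det_mul] at hAC
  set Z : Matrix (Fin 2) (Fin 2) A := ↑(a ^ 2)
  set P := 1 - Z
  have hZP : Z * P = -P := by rw [mul_sub, mul_one, hZ, neg_sub]
  rw [hZP, neg_smul, neg_inj] at hA hC
  rw [one_mul, neg_smul, mul_smul, ← hC, ← hA] at hAC
  exact trace_eq_two_of_mul_self_eq_one hZ (det_eq_one_of_semiconjBy hdc)
    (by rw [two_smul]; exact add_eq_zero_iff_eq_neg.mpr hAC)

end Matrix.GeneralLinearGroup

@[simp]
theorem PresentedGroup.mk_of {α : Type*} {rels : Set (FreeGroup α)} (x : α) :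
    PresentedGroup.mk rels (FreeGroup.of x) = PresentedGroup.of x :=
  rfl

namespace Extraspecial32

local notation "a" => (PresentedGroup.of 0 : Extraspecial32)
local notation "b" => (PresentedGroup.of 1 : Extraspecial32)
local notation "c" => (PresentedGroup.of 2 : Extraspecial32)
local notation "d" => (PresentedGroup.of 3 : Extraspecial32)

theorem a_pow_four : a ^ 4 = 1 := by
  have h := PresentedGroup.one_of_mem
    (show FreeGroup.of 0 ^ 4 ∈ extraspecialRels by simp [extraspecialRels])
  simpa only [map_pow, PresentedGroup.mk_of] using h

theorem b_sq : b ^ 2 = 1 := by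
  have h := PresentedGroup.one_of_mem
    (show FreeGroup.of 1 ^ 2 ∈ extraspecialRels by simp [extraspecialRels])
  simpa only [map_pow, PresentedGroup.mk_of] using h

theorem d_sq : d ^ 2 = 1 := by
  have h := PresentedGroup.one_of_mem
    (show FreeGroup.of 3 ^ 2 ∈ extraspecialRels by simp [extraspecialRels])
  simpa only [map_pow, PresentedGroup.mk_of] using h

theorem c_sq : c ^ 2 = a ^ 2 := by
  have h := PresentedGroup.one_of_mem
    (show FreeGroup.of 2 ^ 2 * (FreeGroup.of 0 ^ 2)⁻¹ ∈ extraspecialRels by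
      simp [extraspecialRels])
  simpa only [map_mul, map_pow, map_inv, PresentedGroup.mk_of, mul_inv_eq_one] using h

theorem commute_a_c : Commute a c := by
  have h := PresentedGroup.one_of_mem
    (show FreeGroup.of 0 * FreeGroup.of 2 * (FreeGroup.of 0)⁻¹ * (FreeGroup.of 2)⁻¹ ∈
      extraspecialRels by simp [extraspecialRels])
  rw [commute_iff_eq]
  simpa only [map_mul, map_inv, PresentedGroup.mk_of, mul_inv_eq_one, mul_inv_eq_iff_eq_mul,
    one_mul] using h

theorem commute_a_d : Commute a d := by
  have h := PresentedGroup.one_of_mem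
    (show FreeGroup.of 0 * FreeGroup.of 3 * (FreeGroup.of 0)⁻¹ * (FreeGroup.of 3)⁻¹ ∈
      extraspecialRels by simp [extraspecialRels])
  rw [commute_iff_eq]
  simpa only [map_mul, map_inv, PresentedGroup.mk_of, mul_inv_eq_one, mul_inv_eq_iff_eq_mul,
    one_mul] using h

theorem semiconjBy_b_a : SemiconjBy b a (a ^ 2 * a) := by
  have h := PresentedGroup.one_of_mem
    (show FreeGroup.of 1 * FreeGroup.of 0 * FreeGroup.of 1 * FreeGroup.of 0 ∈ extraspecialRels by
      simp [extraspecialRels])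
  simp only [map_mul, PresentedGroup.mk_of, mul_eq_one_iff_eq_inv] at h
  have ha_inv : a⁻¹ = a ^ 2 * a :=
    inv_eq_of_mul_eq_one_left (by rw [← pow_succ, ← pow_succ]; exact a_pow_four)
  calc b * a = b * a * b * b := by rw [mul_assoc _ b b, ← sq, b_sq, mul_one]
    _ = a ^ 2 * a * b := by rw [h, ha_inv]

theorem semiconjBy_d_c : SemiconjBy d c (a ^ 2 * c) := by
  have h := PresentedGroup.one_of_mem
    (show FreeGroup.of 3 * FreeGroup.of 2 * FreeGroup.of 3 *
      ((FreeGroup.of 0) ^ 2 * FreeGroup.of 2)⁻¹ ∈ extraspecialRels by simp [extraspecialRels])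
  simp only [map_mul, map_pow, map_inv, PresentedGroup.mk_of, mul_inv_eq_one] at h
  calc d * c = d * c * d * d := by rw [mul_assoc _ d d, ← sq, d_sq, mul_one]
    _ = a ^ 2 * c * d := by rw [h]

end Extraspecial32

/-- For any commutative ring `A` and any representation `ρ : 2₊^{1+4} → GL₂(A)`, the trace of
`ρ(a²)` equals `2`. -/
theorem extraspecial_trace_a_sq_eq_two
    {A : Type*} [CommRing A]
    (ρ : Extraspecial32 →* Matrix.GeneralLinearGroup (Fin 2) A) :
    Matrix.trace
      ((ρ ((PresentedGroup.of 0 : Extraspecial32) ^ 2)) : Matrix (Fin 2) (Fin 2) A) = 2 := by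
  rw [map_pow]
  exact Matrix.GeneralLinearGroup.trace_sq_eq_two
    (by rw [← map_pow, Extraspecial32.a_pow_four, map_one])
    (by rw [← map_pow, ← map_pow, Extraspecial32.c_sq])
    (Extraspecial32.commute_a_c.map ρ)
    (by simpa only [map_mul, map_pow] using Extraspecial32.semiconjBy_b_a.map ρ)
    (Extraspecial32.commute_a_d.symm.map ρ)
    (by simpa only [map_mul, map_pow] using Extraspecial32.semiconjBy_d_c.map ρ)
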